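/- Let V be a vector space of dimension at least 3 over a field F of characteristic ≠ 2 with a nondegenerate symmetric bilinear form. Let l be a nondegenerate 2-dimensional subspace (a line) and ⟨a⟩ a nondegenerate 1-dimensional subspace (a point) with a ∉ l. Then there are at most two nondegenerate 1-dimensional subspaces ⟨x⟩ ≤ l such that the 2-dimensional subspace ⟨a, x⟩ is degenerate. -/

import Mathlib

/-!
For a line `l` and an anisotropic vector `a`, the Gram determinant
`q(x) = B(a,a) B(x,x) - B(a,x)²` is a binary quadratic form on `l`, and `⟨a, x⟩` can only be
degenerate when `q(x) = 0`. A binary quadratic form (char ≠ 2) vanishing at three distinct points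
of the projective line vanishes identically, so its polar form `B(a,a) B(u,v) - B(a,u) B(a,v)` is
zero on `l`. Then any nonzero `w ∈ l` orthogonal to `a` (one exists since `dim l = 2`) is in the
radical of `l`, contradicting the nondegeneracy of `l`.
-/

open Module Submodule
open LinearMap (BilinForm)

lemma exists_forall_eq_or_eq_of_not_three {α : Type*} [Nonempty α] {p : α → Prop}
    (h : ∀ x y z, p x → p y → p z → x ≠ y → x ≠ z → y ≠ z → False) :
    ∃ a b, ∀ x, p x → x = a ∨ x = b := by
  by_cases hpair : ∃ a b, p a ∧ p b ∧ a ≠ b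
  · obtain ⟨a, b, ha, hb, hab⟩ := hpair
    refine ⟨a, b, fun x hx => ?_⟩
    by_contra! hx'
    exact h a b x ha hb hx hab (Ne.symm hx'.1) (Ne.symm hx'.2)
  · push Not at hpair
    by_cases hp : ∃ a, p a
    · obtain ⟨a, ha⟩ := hp
      exact ⟨a, a, fun x hx => Or.inl (hpair x a hx ha)⟩
    · push Not at hp
      exact ⟨Classical.arbitrary α, Classical.arbitrary α, fun x hx => (hp x hx).elim⟩

section Span

variable {F V : Type*} [Field F] [AddCommGroup V] [Module F V]

lemma Submodule.exists_eq_span_singleton_of_finrank_eq_one {P : Submodule F V}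
    (h : finrank F P = 1) : ∃ x ≠ 0, P = F ∙ x := by
  obtain ⟨x, hxP, hx0⟩ := P.exists_mem_ne_zero_of_ne_bot (by rintro rfl; simp at h)
  exact ⟨x, hx0, eq_span_singleton_of_mem_of_finrank_eq_one h hxP hx0⟩

lemma linearIndependent_pair_of_span_singleton_ne {x y : V} (hx : x ≠ 0) (hy : y ≠ 0)
    (h : F ∙ x ≠ F ∙ y) : LinearIndependent F ![x, y] := by
  rw [LinearIndependent.pair_iff' hx]
  rintro c rfl
  have hc : c ≠ 0 := by rintro rfl; simp at hy
  exact h (span_singleton_smul_eq (IsUnit.mk0 c hc) x).symm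

lemma eq_span_pair_and_exists_smul_add_smul {l : Submodule F V} (hl : finrank F l = 2)
    {x y z : V} (hx : x ∈ l) (hy : y ∈ l) (hz : z ∈ l) (hx0 : x ≠ 0) (hy0 : y ≠ 0)
    (hz0 : z ≠ 0) (hxy : F ∙ x ≠ F ∙ y) (hxz : F ∙ x ≠ F ∙ z) (hyz : F ∙ y ≠ F ∙ z) :
    l = span F {x, y} ∧ ∃ s t : F, s ≠ 0 ∧ t ≠ 0 ∧ z = s • x + t • y := by
  have : FiniteDimensional F l := finite_of_finrank_pos (by omega)
  have hspan : span F {x, y} = l := by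
    refine eq_of_le_of_finrank_eq (span_le.mpr (Set.insert_subset hx
      (Set.singleton_subset_iff.mpr hy))) ?_
    rw [hl, ← Matrix.range_cons_cons_empty x y, finrank_span_eq_card
      (linearIndependent_pair_of_span_singleton_ne hx0 hy0 hxy), Fintype.card_fin]
  obtain ⟨s, t, rfl⟩ := mem_span_pair.mp (hspan ▸ hz)
  refine ⟨hspan.symm, s, t, ?_, ?_, rfl⟩
  · rintro rfl
    rw [zero_smul, zero_add] at hz0 hyz
    exact hyz (span_singleton_smul_eq (IsUnit.mk0 t (by rintro rfl; simp at hz0)) y).symm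
  · rintro rfl
    rw [zero_smul, add_zero] at hz0 hxz
    exact hxz (span_singleton_smul_eq (IsUnit.mk0 s (by rintro rfl; simp at hz0)) x).symm

end Span

namespace LinearMap.BilinForm

variable {F V : Type*} [Field F] [AddCommGroup V] [Module F V]

/-- The polar form of the Gram determinant `B(a,a) B(x,x) - B(a,x)²` of `(a, x)`. -/
def collinearityForm (B : BilinForm F V) (a : V) : BilinForm F V :=
  B a a • B - (LinearMap.mul F F).compl₁₂ (B a) (B a)

@[simp]
lemma collinearityForm_apply (B : BilinForm F V) (a x y : V) :
    B.collinearityForm a x y = B a a * B x y - B a x * B a y :=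
  rfl

lemma IsSymm.collinearityForm {B : BilinForm F V} (hB : B.IsSymm) (a : V) :
    (B.collinearityForm a).IsSymm :=
  ⟨fun x y => by rw [collinearityForm_apply, collinearityForm_apply, hB.eq x y]; ring⟩

lemma IsSymm.collinearityForm_self_eq_zero_of_not_nondegenerate {B : BilinForm F V} (hB : B.IsSymm)
    {a x : V} (h : ¬ (B.restrict ((F ∙ a) ⊔ (F ∙ x))).Nondegenerate) :
    B.collinearityForm a x x = 0 := by
  by_contra hq
  refine h ((hB.restrict _).isRefl.nondegenerate_iff_separatingLeft.mpr fun ⟨m, hm⟩ horth => ?_)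
  obtain ⟨_, hα, _, hβ, rfl⟩ := mem_sup.mp hm
  obtain ⟨α, rfl⟩ := mem_span_singleton.mp hα
  obtain ⟨β, rfl⟩ := mem_span_singleton.mp hβ
  have ha : α * B a a + β * B x a = 0 := by
    simpa using horth ⟨a, mem_sup_left (mem_span_singleton_self a)⟩
  have hx : α * B a x + β * B x x = 0 := by
    simpa using horth ⟨x, mem_sup_right (mem_span_singleton_self x)⟩
  rw [hB.eq x a] at ha
  -- Cramer's rule for the Gram matrix of `(a, x)`
  obtain rfl : α = 0 := mul_right_cancel₀ hq (by
    rw [collinearityForm_apply]; linear_combination B x x * ha - B a x * hx)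
  obtain rfl : β = 0 := mul_right_cancel₀ hq (by
    rw [collinearityForm_apply]; linear_combination B a a * hx - B a x * ha)
  simp

lemma IsSymm.restrict_span_pair_eq_zero {Q : BilinForm F V} (hQ : Q.IsSymm) (h2 : (2 : F) ≠ 0)
    {x y : V} {s t : F} (hs : s ≠ 0) (ht : t ≠ 0) (hx : Q x x = 0) (hy : Q y y = 0)
    (hz : Q (s • x + t • y) (s • x + t • y) = 0) : Q.restrict (span F {x, y}) = 0 := by
  simp only [map_add, map_smul, LinearMap.add_apply, LinearMap.smul_apply, smul_eq_mul, hx, hy,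
    hQ.eq y x] at hz
  have hxy : Q x y = 0 := by
    refine (mul_eq_zero.mp ?_).resolve_left (mul_ne_zero (mul_ne_zero h2 hs) ht)
    linear_combination hz
  ext ⟨u, hu⟩ ⟨v, hv⟩
  obtain ⟨α, β, rfl⟩ := mem_span_pair.mp hu
  obtain ⟨γ, δ, rfl⟩ := mem_span_pair.mp hv
  simp [hx, hy, hxy, hQ.eq y x]

lemma Nondegenerate.collinearityForm_restrict_ne_zero {B : BilinForm F V} {l : Submodule F V}
    (hl : (B.restrict l).Nondegenerate) (hl1 : 1 < finrank F l) {a : V} (ha : B a a ≠ 0) :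
    (B.collinearityForm a).restrict l ≠ 0 := by
  intro h0
  have : FiniteDimensional F l := finite_of_finrank_pos (by omega)
  obtain ⟨w, hw, hw0⟩ := exists_mem_ne_zero_of_ne_bot
    (((B a).domRestrict l).ker_ne_bot_of_finrank_lt (by rwa [finrank_self]))
  have hwa : B a w = 0 := hw
  refine hw0 (hl.1 w fun v => ?_)
  have hwv : B.collinearityForm a w v = 0 := LinearMap.congr_fun₂ h0 w v
  rw [collinearityForm_apply, hwa, zero_mul, sub_zero] at hwv
  exact (mul_eq_zero.mp hwv).resolve_left ha

end LinearMap.BilinForm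

theorem point_line_at_most_two_noncollinear
    {F V : Type*} [Field F] [AddCommGroup V] [Module F V]
    (h2 : (2 : F) ≠ 0)
    (B : LinearMap.BilinForm F V) (hsymm : B.IsSymm)
    (l : Submodule F V) (hl2 : finrank F l = 2) (hl : (B.restrict l).Nondegenerate)
    (a : V) (ha : B a a ≠ 0) :
    ∃ P₁ P₂ : Submodule F V, ∀ P : Submodule F V,
      P ≤ l → finrank F P = 1 → (B.restrict P).Nondegenerate →
      ¬ (B.restrict (Submodule.span F {a} ⊔ P)).Nondegenerate →
      P = P₁ ∨ P = P₂ := by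
  obtain ⟨P₁, P₂, hP⟩ := exists_forall_eq_or_eq_of_not_three (p := fun P : Submodule F V =>
    P ≤ l ∧ finrank F P = 1 ∧ (B.restrict P).Nondegenerate ∧
      ¬ (B.restrict (Submodule.span F {a} ⊔ P)).Nondegenerate) (by
    rintro _ _ _ ⟨hxl, hx1, -, hx⟩ ⟨hyl, hy1, -, hy⟩ ⟨hzl, hz1, -, hz⟩ hxy hxz hyz
    obtain ⟨x, hx0, rfl⟩ := exists_eq_span_singleton_of_finrank_eq_one hx1
    obtain ⟨y, hy0, rfl⟩ := exists_eq_span_singleton_of_finrank_eq_one hy1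
    obtain ⟨z, hz0, rfl⟩ := exists_eq_span_singleton_of_finrank_eq_one hz1
    obtain ⟨hl_eq, s, t, hs, ht, rfl⟩ := eq_span_pair_and_exists_smul_add_smul hl2
      (hxl (mem_span_singleton_self x)) (hyl (mem_span_singleton_self y))
      (hzl (mem_span_singleton_self z)) hx0 hy0 hz0 hxy hxz hyz
    refine hl.collinearityForm_restrict_ne_zero (by omega) ha ?_
    rw [hl_eq]
    exact (hsymm.collinearityForm a).restrict_span_pair_eq_zero h2 hs ht
      (hsymm.collinearityForm_self_eq_zero_of_not_nondegenerate hx)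
      (hsymm.collinearityForm_self_eq_zero_of_not_nondegenerate hy)
      (hsymm.collinearityForm_self_eq_zero_of_not_nondegenerate hz))
  exact ⟨P₁, P₂, fun P hPl hP1 hPnd hPdeg => hP P ⟨hPl, hP1, hPnd, hPdeg⟩⟩
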